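/- arXiv:2211.17244 — 4 statements merged into one kernel-verified Lean document; each statement's English description precedes it below -/
import Mathlib

section
/- Single-neuron LICQ: let α₀, α, ᾱ, γ ∈ ℝ and β, β̄ ∈ ℝ^{r−1} with α₀² = 1, α + γα₀ ≠ 0, and β ≠ 0. Suppose g₁ = α₀ᾱ ≥ 0, g₂ = α₀(ᾱ − α − γα₀) ≥ 0, and h₁ = ᾱ(ᾱ − α − γα₀) + ⟨β̄, β̄ − β⟩ = 0. Then for scalars y₁, y₂, z₁, the system: α₀y₁ + α₀y₂ + (2ᾱ − α − γα₀)z₁ = 0, (2β̄ − β)z₁ = 0 (as a vector equation in ℝ^{r−1}), g₁·y₁ = 0, g₂·y₂ = 0, holds if and only if y₁ = y₂ = z₁ = 0. -/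
/-- Single-neuron LICQ: under `α₀² = 1`, `α + γα₀ ≠ 0`, `β ≠ 0`, feasibility
`g₁ = α₀ᾱ ≥ 0`, `g₂ = α₀(ᾱ − α − γα₀) ≥ 0` and `h₁ = 0`, the homogeneous KKT system
has only the trivial solution. -/
theorem stmt_7 {m : ℕ} (α₀ α α' γ y₁ y₂ z₁ : ℝ) (β β' : EuclideanSpace ℝ (Fin m))
    (hα₀ : α₀ ^ 2 = 1) (hne : α + γ * α₀ ≠ 0) (hβ : β ≠ 0)
    (hg₁ : 0 ≤ α₀ * α') (hg₂ : 0 ≤ α₀ * (α' - α - γ * α₀))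
    (hh : α' * (α' - α - γ * α₀) + (inner ℝ β' (β' - β) : ℝ) = 0) :
    (α₀ * y₁ + α₀ * y₂ + (2 * α' - α - γ * α₀) * z₁ = 0 ∧
      z₁ • ((2 : ℝ) • β' - β) = 0 ∧
      (α₀ * α') * y₁ = 0 ∧ (α₀ * (α' - α - γ * α₀)) * y₂ = 0)
    ↔ (y₁ = 0 ∧ y₂ = 0 ∧ z₁ = 0) := by
  have hα₀ne : α₀ ≠ 0 := by intro h; rw [h] at hα₀; norm_num at hα₀
  constructor
  · rintro ⟨e1, e2, c1, c2⟩
    by_cases hz : z₁ = 0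
    · subst hz
      rw [mul_zero, add_zero] at e1
      by_cases hy1 : y₁ = 0
      · subst hy1
        refine ⟨rfl, ?_, rfl⟩
        rw [mul_zero, zero_add] at e1
        exact (mul_eq_zero.mp e1).resolve_left hα₀ne
      · exfalso
        have hα' : α' = 0 := by
          rcases mul_eq_zero.mp c1 with h | h
          · exact (mul_eq_zero.mp h).resolve_left hα₀ne
          · exact absurd h hy1
        have hy2 : y₂ = -y₁ := by
          have hs : α₀ * (y₁ + y₂) = 0 := by ring_nf; linarith
          have := (mul_eq_zero.mp hs).resolve_left hα₀ne
          linarith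
        have : α₀ * (α' - α - γ * α₀) = 0 := by
          rcases mul_eq_zero.mp c2 with h | h
          · exact h
          · rw [hy2] at h; simp [hy1] at h
        rcases mul_eq_zero.mp this with h | h
        · exact hα₀ne h
        · apply hne; rw [hα'] at h; linarith
    · exfalso
      have hb : (2 : ℝ) • β' - β = 0 := (smul_eq_zero.mp e2).resolve_left hz
      have hβ' : β' = (2⁻¹ : ℝ) • β := by
        have h2 : (2 : ℝ) • β' = β := sub_eq_zero.mp hb
        rw [← h2, smul_smul]; norm_num
      have hB : (0 : ℝ) < inner ℝ β β := lt_of_le_of_ne real_inner_self_nonneg (fun h => hβ (real_inner_self_nonpos.mp h.ge))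
      rw [hβ'] at hh
      have hin : (inner ℝ ((2⁻¹ : ℝ) • β) ((2⁻¹ : ℝ) • β - β) : ℝ)
          = -(4⁻¹ : ℝ) * inner ℝ β β := by
        rw [inner_sub_right, real_inner_smul_left, real_inner_smul_left,
          real_inner_smul_right]
        ring
      rw [hin] at hh
      have hprod : 0 < α' * (α' - α - γ * α₀) := by nlinarith
      have hy1 : y₁ = 0 := by
        rcases mul_eq_zero.mp c1 with h | h
        · exfalso; nlinarith
        · exact h
      have hy2 : y₂ = 0 := by
        rcases mul_eq_zero.mp c2 with h | h
        · exfalso; nlinarith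
        · exact h
      simp only [hy1, hy2, mul_zero, zero_add] at e1
      rcases mul_eq_zero.mp e1 with h | h
      · have h2 : α' - α - γ * α₀ = -α' := by linarith
        rw [h2] at hprod
        nlinarith [sq_nonneg α']
      · exact hz h
  · rintro ⟨rfl, rfl, rfl⟩
    simp
end

section
/- Under the same stationarity conditions (u₀(s₀ − μ) + s₁ᵀu = 0, u₀s₁ + (S₂ − μI)u = 0, u₀ ≠ 0), the slack matrix admits the rank-factored form S − μI = W (S₂ − μI) Wᵀ, where W = [uᵀ/u₀; −I] is the (n+1)×n matrix with first row uᵀ/u₀ and remaining block −I_n. -/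
/-- Under the stationarity conditions, the slack matrix admits the rank-factored form
`S − μI = W (S₂ − μI) Wᵀ` with `W = [uᵀ/u₀; −I]`. -/
theorem stmt_10 {n : ℕ} (s₀ : ℝ) (s₁ : Matrix (Fin n) (Fin 1) ℝ)
    (S₂ : Matrix (Fin n) (Fin n) ℝ) (hS₂ : S₂.IsHermitian)
    (u₀ : ℝ) (hu₀ : u₀ ≠ 0) (u : Matrix (Fin n) (Fin 1) ℝ) (μ : ℝ)
    (h1 : u₀ * (s₀ - μ) + (s₁.transpose * u) 0 0 = 0)
    (h2 : u₀ • s₁ + (S₂ - μ • (1 : Matrix (Fin n) (Fin n) ℝ)) * u = 0) :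
    Matrix.fromBlocks (s₀ • (1 : Matrix (Fin 1) (Fin 1) ℝ)) s₁.transpose s₁ S₂
        - μ • (1 : Matrix (Fin 1 ⊕ Fin n) (Fin 1 ⊕ Fin n) ℝ)
      = (Matrix.of fun (i : Fin 1 ⊕ Fin n) (j : Fin n) =>
            Sum.elim (fun _ : Fin 1 => u j 0 / u₀)
              (fun i' : Fin n => -((1 : Matrix (Fin n) (Fin n) ℝ) i' j)) i)
        * (S₂ - μ • (1 : Matrix (Fin n) (Fin n) ℝ))
        * (Matrix.of fun (i : Fin 1 ⊕ Fin n) (j : Fin n) =>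
            Sum.elim (fun _ : Fin 1 => u j 0 / u₀)
              (fun i' : Fin n => -((1 : Matrix (Fin n) (Fin n) ℝ) i' j)) i).transpose := by
  set A := S₂ - μ • (1 : Matrix (Fin n) (Fin n) ℝ) with hA
  have hAu : A * u = (-u₀) • s₁ := by
    rw [neg_smul]; exact eq_neg_of_add_eq_zero_right h2
  have hAt : A.transpose = A := by
    rw [hA, Matrix.transpose_sub, Matrix.transpose_smul, Matrix.transpose_one]
    have : S₂.transpose = S₂ := by
      simpa [Matrix.conjTranspose_eq_transpose_of_trivial] using hS₂.eq
    rw [this]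
  have huA : u.transpose * A = (-u₀) • s₁.transpose := by
    have := congrArg Matrix.transpose hAu
    rw [Matrix.transpose_mul, hAt, Matrix.transpose_smul] at this
    exact this
  have hW : (Matrix.of fun (i : Fin 1 ⊕ Fin n) (j : Fin n) =>
            Sum.elim (fun _ : Fin 1 => u j 0 / u₀)
              (fun i' : Fin n => -((1 : Matrix (Fin n) (Fin n) ℝ) i' j)) i)
      = Matrix.fromRows (u₀⁻¹ • u.transpose) (-1) := by
    ext i j
    rcases i with i | i
    · fin_cases i; simp [Matrix.fromRows_apply_inl, div_eq_inv_mul, mul_comm]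
    · simp [Matrix.fromRows_apply_inr]
  rw [hW, Matrix.transpose_fromRows, Matrix.transpose_smul, Matrix.transpose_transpose,
    Matrix.transpose_neg, Matrix.transpose_one, Matrix.fromRows_mul,
    Matrix.fromRows_mul_fromCols, ← Matrix.fromBlocks_one, Matrix.fromBlocks_smul,
    sub_eq_add_neg, Matrix.fromBlocks_neg, Matrix.fromBlocks_add, Matrix.fromBlocks_inj]
  refine ⟨?_, ?_, ?_, ?_⟩
  · ext i j
    fin_cases i; fin_cases j
    have h1' : (s₁.transpose * u) 0 0 = -(u₀ * (s₀ - μ)) := by linarith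
    simp [Matrix.smul_mul, Matrix.mul_smul, huA, Matrix.smul_apply, h1', smul_smul]
    field_simp
    ring
  · simp [Matrix.smul_mul, huA, smul_smul, hu₀]
  · simp [Matrix.mul_smul, hAu, smul_smul, hu₀]
  · simp [hA, sub_eq_add_neg]
end

section
/- Second-order decrement formula: with S symmetric of size (n+1)×(n+1) satisfying S − μI = W(S₂ − μI)Wᵀ where W = [uᵀ/u₀; −I_n], for any ξ₀ ∈ ℝ and ξ₁ ∈ ℝⁿ, setting ξ₂ = (u/u₀)ξ₀ − ξ₁, one has (0, ξ₂)ᵀ (S − μI) (0, ξ₂) = (ξ₀, ξ₁)ᵀ (S − μI) (ξ₀, ξ₁). In particular, if (ξ₀,ξ₁) is a unit eigenvector of S − μI with eigenvalue −γ < 0, then the second-order directional derivative 2·(0,ξ₂)ᵀ(S − μI)(0,ξ₂) equals −γ·2 < 0. -/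
open scoped Matrix

/-- Second-order decrement formula: if `S − μI = W (S₂ − μI) Wᵀ` with
`W = [uᵀ/u₀; −I]`, then for `ξ₂ = (u/u₀)ξ₀ − ξ₁` the quadratic forms agree:
`(0,ξ₂)ᵀ(S−μI)(0,ξ₂) = (ξ₀,ξ₁)ᵀ(S−μI)(ξ₀,ξ₁)`; in particular if `(ξ₀,ξ₁)` is a
unit eigenvector with eigenvalue `−γ < 0`, the second-order directional derivative
equals `−2γ < 0`. -/
theorem stmt_12 {n : ℕ} (S : Matrix (Fin 1 ⊕ Fin n) (Fin 1 ⊕ Fin n) ℝ)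
    (hS : S.IsHermitian) (S₂ : Matrix (Fin n) (Fin n) ℝ)
    (u₀ : ℝ) (hu₀ : u₀ ≠ 0) (u : Fin n → ℝ) (μ γ : ℝ)
    (hfact : S - μ • (1 : Matrix (Fin 1 ⊕ Fin n) (Fin 1 ⊕ Fin n) ℝ)
      = (Matrix.of fun (i : Fin 1 ⊕ Fin n) (j : Fin n) =>
            Sum.elim (fun _ : Fin 1 => u j / u₀)
              (fun i' : Fin n => -((1 : Matrix (Fin n) (Fin n) ℝ) i' j)) i)
        * (S₂ - μ • (1 : Matrix (Fin n) (Fin n) ℝ))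
        * (Matrix.of fun (i : Fin 1 ⊕ Fin n) (j : Fin n) =>
            Sum.elim (fun _ : Fin 1 => u j / u₀)
              (fun i' : Fin n => -((1 : Matrix (Fin n) (Fin n) ℝ) i' j)) i).transpose)
    (ξ₀ : ℝ) (ξ₁ : Fin n → ℝ) :
    (Sum.elim (fun _ : Fin 1 => (0 : ℝ)) (fun i => (u i / u₀) * ξ₀ - ξ₁ i)) ⬝ᵥ
        ((S - μ • 1).mulVec
          (Sum.elim (fun _ : Fin 1 => (0 : ℝ)) (fun i => (u i / u₀) * ξ₀ - ξ₁ i)))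
      = (Sum.elim (fun _ : Fin 1 => ξ₀) ξ₁) ⬝ᵥ
          ((S - μ • 1).mulVec (Sum.elim (fun _ : Fin 1 => ξ₀) ξ₁)) ∧
    ((S - μ • 1).mulVec (Sum.elim (fun _ : Fin 1 => ξ₀) ξ₁)
        = (-γ) • (Sum.elim (fun _ : Fin 1 => ξ₀) ξ₁) →
      (∑ i, (Sum.elim (fun _ : Fin 1 => ξ₀) ξ₁) i ^ 2 = 1) → 0 < γ →
      2 * ((Sum.elim (fun _ : Fin 1 => (0 : ℝ)) (fun i => (u i / u₀) * ξ₀ - ξ₁ i)) ⬝ᵥ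
          ((S - μ • 1).mulVec
            (Sum.elim (fun _ : Fin 1 => (0 : ℝ)) (fun i => (u i / u₀) * ξ₀ - ξ₁ i))))
        = -(2 * γ) ∧ -(2 * γ) < 0) := by
  classical
  set W : Matrix (Fin 1 ⊕ Fin n) (Fin n) ℝ :=
    (Matrix.of fun (i : Fin 1 ⊕ Fin n) (j : Fin n) =>
      Sum.elim (fun _ : Fin 1 => u j / u₀)
        (fun i' : Fin n => -((1 : Matrix (Fin n) (Fin n) ℝ) i' j)) i) with hW
  set M : Matrix (Fin n) (Fin n) ℝ := S₂ - μ • 1 with hM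
  set ξ₂ : Fin n → ℝ := fun i => (u i / u₀) * ξ₀ - ξ₁ i with hξ₂
  set v₂ : (Fin 1 ⊕ Fin n) → ℝ := Sum.elim (fun _ : Fin 1 => (0 : ℝ)) ξ₂ with hv₂
  set v₁ : (Fin 1 ⊕ Fin n) → ℝ := Sum.elim (fun _ : Fin 1 => ξ₀) ξ₁ with hv₁
  have key : ∀ v : (Fin 1 ⊕ Fin n) → ℝ,
      v ⬝ᵥ ((S - μ • 1).mulVec v) = (Wᵀ.mulVec v) ⬝ᵥ M.mulVec (Wᵀ.mulVec v) := by
    intro v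
    rw [hfact]
    rw [← Matrix.mulVec_mulVec, ← Matrix.mulVec_mulVec, Matrix.dotProduct_mulVec,
      ← Matrix.mulVec_transpose]
  have hWv₂ : Wᵀ.mulVec v₂ = fun j => -ξ₂ j := by
    funext j
    simp [Matrix.mulVec, dotProduct, Fintype.sum_sum_type, hW, hv₂,
      Matrix.one_apply, Finset.sum_ite_eq]
  have hWv₁ : Wᵀ.mulVec v₁ = ξ₂ := by
    funext j
    simp [Matrix.mulVec, dotProduct, Fintype.sum_sum_type, hW, hv₁, hξ₂,
      Matrix.one_apply, Finset.sum_ite_eq]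
    ring
  have heq : v₂ ⬝ᵥ ((S - μ • 1).mulVec v₂) = v₁ ⬝ᵥ ((S - μ • 1).mulVec v₁) := by
    rw [key v₂, key v₁, hWv₂, hWv₁]
    have : (fun j => -ξ₂ j) = -ξ₂ := rfl
    rw [this, Matrix.mulVec_neg, neg_dotProduct, dotProduct_neg, neg_neg]
  refine ⟨heq, fun heig hnorm hγ => ?_⟩
  have hdot : v₁ ⬝ᵥ v₁ = 1 := by
    rw [← hnorm]
    simp [dotProduct, sq]
  rw [heq, heig, dotProduct_smul, hdot]
  constructor
  · rw [smul_eq_mul]; ring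
  · linarith
end

section
/- Layer-wise decoupling of the LICQ system: let W ∈ ℝ^{n̄×n}, b ∈ ℝ^{n̄}, u₀ ∈ ℝ with u₀² = 1, u ∈ ℝⁿ, ū ∈ ℝ^{n̄}, V ∈ ℝ^{n×(r−1)}, V̄ ∈ ℝ^{n̄×(r−1)}. Suppose for every i ∈ {1,…,n̄}: eᵢᵀ(Wu + bu₀) ≠ 0, eᵢᵀWV ≠ 0, eᵢᵀ(u₀ū) ≥ 0, eᵢᵀ(u₀(ū − Wu − bu₀)) ≥ 0, and eᵢᵀ diag[(ū − Wu − bu₀)ūᵀ + (V̄ − WV)V̄ᵀ] = 0. Then the only solution (y₁, y₂, z₁) ∈ ℝ^{n̄}×ℝ^{n̄}×ℝ^{n̄} to the system u₀y₁ + u₀y₂ + diag(2ū − Wu − bu₀)z₁ = 0, diag(2v̄_j − Wv_j)z₁ = 0 for each column j of V, V̄, together with complementarity (u₀ū)⊙y₁ = 0 and (u₀(ū − Wu − bu₀))⊙y₂ = 0, is y₁ = y₂ = z₁ = 0. -/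
/-- Layer-wise decoupling of the LICQ system (single layer, Lemma "Single layer"):
under nonzero preactivation `eᵢᵀ(Wu + bu₀) ≠ 0`, `eᵢᵀWV ≠ 0`, feasibility and
complementarity, the homogeneous KKT system has only the trivial solution. -/
theorem stmt_15 {n n' m : ℕ} (W : Matrix (Fin n') (Fin n) ℝ) (b : Fin n' → ℝ)
    (u₀ : ℝ) (hu₀ : u₀ ^ 2 = 1) (u : Fin n → ℝ) (ub : Fin n' → ℝ)
    (V : Matrix (Fin n) (Fin m) ℝ) (Vb : Matrix (Fin n') (Fin m) ℝ)
    (hpre : ∀ i, W.mulVec u i + b i * u₀ ≠ 0)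
    (hWV : ∀ i, (fun j => (W * V) i j) ≠ 0)
    (hg₁ : ∀ i, 0 ≤ u₀ * ub i)
    (hg₂ : ∀ i, 0 ≤ u₀ * (ub i - W.mulVec u i - b i * u₀))
    (hh : ∀ i, (ub i - W.mulVec u i - b i * u₀) * ub i
        + ∑ j, (Vb i j - (W * V) i j) * Vb i j = 0)
    (y₁ y₂ z₁ : Fin n' → ℝ)
    (heq1 : ∀ i, u₀ * y₁ i + u₀ * y₂ i + (2 * ub i - W.mulVec u i - b i * u₀) * z₁ i = 0)
    (heq2 : ∀ (j : Fin m) (i : Fin n'), (2 * Vb i j - (W * V) i j) * z₁ i = 0)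
    (hc₁ : ∀ i, (u₀ * ub i) * y₁ i = 0)
    (hc₂ : ∀ i, (u₀ * (ub i - W.mulVec u i - b i * u₀)) * y₂ i = 0) :
    y₁ = 0 ∧ y₂ = 0 ∧ z₁ = 0 := by
  have hu0 : u₀ ≠ 0 := by
    intro h; rw [h] at hu₀; norm_num at hu₀
  have key : ∀ i, y₁ i = 0 ∧ y₂ i = 0 ∧ z₁ i = 0 := by
    intro i
    set α : ℝ := W.mulVec u i + b i * u₀ with hαdef
    have hα : α ≠ 0 := hpre i
    have hz : z₁ i = 0 := by
      by_contra hz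
      have hv : ∀ j, Vb i j = (W * V) i j / 2 := by
        intro j
        rcases mul_eq_zero.mp (heq2 j i) with h | h
        · linarith
        · exact absurd h hz
      obtain ⟨j₀, hj₀⟩ : ∃ j, (W * V) i j ≠ 0 := by
        by_contra h; push_neg at h
        exact hWV i (funext fun j => h j)
      have hsum : ∑ j, (Vb i j - (W * V) i j) * Vb i j
          = - ∑ j, ((W * V) i j) ^ 2 / 4 := by
        rw [← Finset.sum_neg_distrib]
        refine Finset.sum_congr rfl fun j _ => ?_
        rw [hv j]; ring
      have hpos : 0 < ∑ j, ((W * V) i j) ^ 2 / 4 := by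
        refine Finset.sum_pos' (fun j _ => by positivity) ⟨j₀, Finset.mem_univ _, by positivity⟩
      have hprod : 0 < (ub i - α) * ub i := by
        have := hh i
        rw [hsum] at this
        rw [hαdef]
        nlinarith [this, hpos]
      have hub : ub i ≠ 0 := by
        intro h; rw [h] at hprod; simp at hprod
      have hubα : ub i - α ≠ 0 := by
        intro h; rw [h] at hprod; simp at hprod
      have hy₁ : y₁ i = 0 := by
        have := hc₁ i
        rcases mul_eq_zero.mp this with h | h
        · exact absurd h (mul_ne_zero hu0 hub)
        · exact h
      have hy₂ : y₂ i = 0 := by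
        have h2 := hc₂ i
        have : u₀ * (ub i - W.mulVec u i - b i * u₀) ≠ 0 := by
          apply mul_ne_zero hu0
          intro h; apply hubα; rw [hαdef]; linarith
        rcases mul_eq_zero.mp h2 with h | h
        · exact absurd h this
        · exact h
      have h1 := heq1 i
      rw [hy₁, hy₂] at h1
      have h2ub : 2 * ub i - α = 0 := by
        have : (2 * ub i - W.mulVec u i - b i * u₀) * z₁ i = 0 := by linarith
        rcases mul_eq_zero.mp this with h | h
        · rw [hαdef]; linarith
        · exact absurd h hz
      have hα2 : α = 2 * ub i := by linarith
      rw [hα2] at hprod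
      nlinarith [sq_nonneg (ub i)]
    have hy12 : y₁ i + y₂ i = 0 := by
      have h1 := heq1 i
      rw [hz] at h1
      have : u₀ * (y₁ i + y₂ i) = 0 := by ring_nf; ring_nf at h1; linarith
      rcases mul_eq_zero.mp this with h | h
      · exact absurd h hu0
      · exact h
    have hy₁ : y₁ i = 0 := by
      by_contra hy
      have hub : ub i = 0 := by
        rcases mul_eq_zero.mp (hc₁ i) with h | h
        · rcases mul_eq_zero.mp h with h | h
          · exact absurd h hu0
          · exact h
        · exact absurd h hy
      have hy2 : y₂ i ≠ 0 := by intro h; apply hy; linarith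
      have : ub i - W.mulVec u i - b i * u₀ = 0 := by
        rcases mul_eq_zero.mp (hc₂ i) with h | h
        · rcases mul_eq_zero.mp h with h | h
          · exact absurd h hu0
          · exact h
        · exact absurd h hy2
      apply hα; rw [hαdef]; linarith
    exact ⟨hy₁, by linarith, hz⟩
  exact ⟨funext fun i => (key i).1, funext fun i => (key i).2.1, funext fun i => (key i).2.2⟩
end
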